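/- Let η1, η2 ∈ [0,1] and let (A_i)_{i∈I} be a finite family of N×N complex matrices with Σ_i A_i† A_i = 1. Assume the S1(η1) condition (1/N) Σ_{k∈ZMod N} Σ_i |(A_i F)_{k,k}|² ≥ 1 − η1 and the S2(η2) condition (1/N) Σ_k Σ_i |(F A_i)_{k,k}|² ≥ 1 − η2. Then the threefold-composed channel C³, whose Kraus operators are the triple products (A_i A_j A_m)_{(i,j,m)∈I³}, satisfies: (i) the T1 condition (1/N) Σ_{k∈ZMod N} Σ_{i,j,m} |(A_i A_j A_m F)_{−k,k}|² ≥ 1 − (√η1 + √(√η1 + √η2)); and (ii) the T2 condition (1/N) Σ_k Σ_{i,j,m} |(F† A_i A_j A_m)_{k,k}|² ≥ 1 − (√η2 + √(√η1 + √η2)). -/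

import Mathlib

/-!
For a unit vector `χ`, the form `z ↦ ∑ᵢ |⟨χ, Aᵢ z⟩|²` is the quadratic form of an effect
`0 ≤ Q ≤ 1`, so `2Q - 1` is a contraction and, for unit vectors `x`, `y`,
`⟨x, Qx⟩ - ⟨y, Qy⟩ = ½ Re ⟨(2Q - 1)(x - y), x + y⟩ ≤ ½ ‖x - y‖ ‖x + y‖ = √(1 - (Re ⟨x, y⟩)²)`.
Purifying a mixed input state turns this into continuity of the transition probabilities of the
channel in its input, with modulus `√(1 - fidelity)`. Applied twice along
`fₖ → eₖ → f₋ₖ → e₋ₖ` (for T1) and `eₖ → f₋ₖ → e₋ₖ → fₖ` (for T2), it bounds each diagonal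
term of `C³` from below by terms that S1 and S2 control; averaging over `k`, concavity of `√`
gives the claim.
-/

open scoped BigOperators ComplexConjugate
open Finset Matrix

/-- The `N × N` quantum Fourier transform matrix, with entries `F j k = ω^{jk} / √N`,
where `ω = exp(2πi/N)`. -/
noncomputable def QFT (N : ℕ) [NeZero N] : Matrix (ZMod N) (ZMod N) ℂ :=
  fun j k => Complex.exp (2 * (Real.pi : ℂ) * Complex.I * (j.val : ℂ) * (k.val : ℂ) / (N : ℂ))
    / (Real.sqrt N : ℂ)

open scoped InnerProductSpace
open RCLike

section Effect

variable {𝕜 E : Type*} [RCLike 𝕜] [NormedAddCommGroup E] [InnerProductSpace 𝕜 E]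

lemma ContinuousLinearMap.norm_le_of_abs_re_inner_self_le {T : E →L[𝕜] E}
    (hT : (T : E →ₗ[𝕜] E).IsSymmetric) {r : ℝ} (hr : 0 ≤ r)
    (h : ∀ z, |re ⟪T z, z⟫_𝕜| ≤ r * ‖z‖ ^ 2) : ‖T‖ ≤ r := by
  rw [T.norm_eq_iSup_rayleighQuotient hT]
  refine ciSup_le fun z => ?_
  rw [ContinuousLinearMap.rayleighQuotient, ContinuousLinearMap.reApplyInnerSelf_apply, abs_div,
    abs_sq]
  rcases eq_or_ne z 0 with rfl | hz
  · simp [hr]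
  · rw [div_le_iff₀ (by positivity)]
    exact h z

lemma LinearMap.IsSymmetric.re_inner_sub_add {T : E →ₗ[𝕜] E} (hT : T.IsSymmetric) (x y : E) :
    re ⟪T (x - y), x + y⟫_𝕜 = re ⟪T x, x⟫_𝕜 - re ⟪T y, y⟫_𝕜 := by
  have h : re ⟪T y, x⟫_𝕜 = re ⟪T x, y⟫_𝕜 := by
    rw [hT, ← inner_conj_symm, conj_re]
  simp only [map_sub, inner_sub_left, inner_add_right, map_add]
  linarith

variable {J : Type*} [Fintype J]

lemma sum_norm_inner_sq_sub_le {ψ : J → E} (hψ : ∀ z, ∑ j, ‖⟪ψ j, z⟫_𝕜‖ ^ 2 ≤ ‖z‖ ^ 2)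
    (x y : E) :
    ∑ j, ‖⟪ψ j, x⟫_𝕜‖ ^ 2 - ∑ j, ‖⟪ψ j, y⟫_𝕜‖ ^ 2
      ≤ (‖x - y‖ * ‖x + y‖ + (‖x‖ ^ 2 - ‖y‖ ^ 2)) / 2 := by
  set T : E →L[𝕜] E := (2 : 𝕜) • ∑ j, InnerProductSpace.rankOne 𝕜 (ψ j) (ψ j) - 1
  have hT : (T : E →ₗ[𝕜] E).IsSymmetric := by
    intro z w
    simp [T, inner_sub_left, inner_sub_right, inner_smul_left, inner_smul_right, sum_inner,
      inner_sum, map_ofNat, mul_comm]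
  have hTz : ∀ z, re ⟪T z, z⟫_𝕜 = 2 * ∑ j, ‖⟪ψ j, z⟫_𝕜‖ ^ 2 - ‖z‖ ^ 2 := by
    intro z
    simp only [T, _root_.sub_apply, _root_.smul_apply,
      _root_.sum_apply, InnerProductSpace.rankOne_apply,
      one_apply_eq_self, inner_sub_left, inner_smul_left, sum_inner,
      RCLike.conj_mul, map_ofNat, inner_self_eq_norm_sq_to_K]
    norm_cast
  have hnorm : ‖T‖ ≤ 1 := by
    refine T.norm_le_of_abs_re_inner_self_le hT zero_le_one fun z => ?_
    rw [hTz, one_mul, abs_le]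
    have hle := hψ z
    have hnn : 0 ≤ ∑ j, ‖⟪ψ j, z⟫_𝕜‖ ^ 2 := by positivity
    constructor <;> linarith
  have hbound : re ⟪T (x - y), x + y⟫_𝕜 ≤ ‖x - y‖ * ‖x + y‖ :=
    calc re ⟪T (x - y), x + y⟫_𝕜 ≤ ‖T (x - y)‖ * ‖x + y‖ := re_inner_le_norm _ _
      _ ≤ ‖x - y‖ * ‖x + y‖ := by
        gcongr
        exact T.le_of_opNorm_le hnorm _ |>.trans_eq (one_mul _)
  have hsub := hT.re_inner_sub_add x y
  simp only [ContinuousLinearMap.coe_coe] at hsub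
  rw [hsub, hTz, hTz] at hbound
  linarith

variable {S : Type*} [Fintype S]

lemma sum_sum_norm_inner_sq_sub_le_sqrt {ψ : J → E} (hψ : ∀ z, ∑ j, ‖⟪ψ j, z⟫_𝕜‖ ^ 2 ≤ ‖z‖ ^ 2)
    {x y : S → E} (hx : ∑ s, ‖x s‖ ^ 2 = 1) (hy : ∑ s, ‖y s‖ ^ 2 = 1) :
    ∑ s, ∑ j, ‖⟪ψ j, x s⟫_𝕜‖ ^ 2 - ∑ s, ∑ j, ‖⟪ψ j, y s⟫_𝕜‖ ^ 2
      ≤ √(1 - (∑ s, re ⟪x s, y s⟫_𝕜) ^ 2) := by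
  set c := ∑ s, re ⟪x s, y s⟫_𝕜
  have hsub : ∑ s, ‖x s - y s‖ ^ 2 = 2 - 2 * c := by
    simp only [norm_sub_sq (𝕜 := 𝕜), sum_add_distrib, sum_sub_distrib, ← mul_sum, hx, hy, c]
    ring
  have hadd : ∑ s, ‖x s + y s‖ ^ 2 = 2 + 2 * c := by
    simp only [norm_add_sq (𝕜 := 𝕜), sum_add_distrib, ← mul_sum, hx, hy, c]
    ring
  calc ∑ s, ∑ j, ‖⟪ψ j, x s⟫_𝕜‖ ^ 2 - ∑ s, ∑ j, ‖⟪ψ j, y s⟫_𝕜‖ ^ 2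
      ≤ ∑ s, (‖x s - y s‖ * ‖x s + y s‖ + (‖x s‖ ^ 2 - ‖y s‖ ^ 2)) / 2 := by
        rw [← sum_sub_distrib]
        exact sum_le_sum fun s _ => sum_norm_inner_sq_sub_le hψ (x s) (y s)
    _ = (∑ s, ‖x s - y s‖ * ‖x s + y s‖) / 2 := by
        rw [← sum_div, sum_add_distrib, sum_sub_distrib, hx, hy, sub_self, add_zero]
    _ ≤ √(∑ s, ‖x s - y s‖ ^ 2) * √(∑ s, ‖x s + y s‖ ^ 2) / 2 := by
        gcongr
        exact Real.sum_mul_le_sqrt_mul_sqrt _ _ _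
    _ = √(1 - c ^ 2) := by
        rw [hsub, hadd, ← Real.sqrt_mul' _ (by rw [← hadd]; positivity),
          show (2 - 2 * c) * (2 + 2 * c) = 2 ^ 2 * (1 - c ^ 2) by ring,
          Real.sqrt_mul' _ (by nlinarith [hsub ▸ (by positivity : (0:ℝ) ≤ ∑ s, ‖x s - y s‖ ^ 2),
            hadd ▸ (by positivity : (0:ℝ) ≤ ∑ s, ‖x s + y s‖ ^ 2)]),
          Real.sqrt_sq zero_le_two]
        ring

lemma sum_norm_inner_sq_sub_sum_sum_le_sqrt {ψ : J → E}
    (hψ : ∀ z, ∑ j, ‖⟪ψ j, z⟫_𝕜‖ ^ 2 ≤ ‖z‖ ^ 2) {φ : E} (hφ : ‖φ‖ = 1)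
    {w : S → E} (hw : ∑ s, ‖w s‖ ^ 2 = 1) :
    ∑ j, ‖⟪ψ j, φ⟫_𝕜‖ ^ 2 - ∑ j, ∑ s, ‖⟪ψ j, w s⟫_𝕜‖ ^ 2
      ≤ √(1 - ∑ s, ‖⟪φ, w s⟫_𝕜‖ ^ 2) := by
  set p := ∑ s, ‖⟪φ, w s⟫_𝕜‖ ^ 2
  rcases (show 0 ≤ p by positivity).eq_or_lt with hp | hp
  · have hφ' := hψ φ
    rw [hφ, one_pow] at hφ'
    rw [← hp, sub_zero, Real.sqrt_one]
    have hnn : 0 ≤ ∑ j, ∑ s, ‖⟪ψ j, w s⟫_𝕜‖ ^ 2 := by positivity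
    linarith
  -- purify `φ` along the mixture `w`, making the overlap `∑ s, ⟪x s, w s⟫ = √p` real
  set x : S → E := fun s => ((√p)⁻¹ * ⟪φ, w s⟫_𝕜 : 𝕜) • φ
  have hxnorm : ∀ s, ‖(√p)⁻¹ * ⟪φ, w s⟫_𝕜‖ ^ 2 = ‖⟪φ, w s⟫_𝕜‖ ^ 2 / p := by
    intro s
    rw [norm_mul, RCLike.norm_ofReal, abs_of_nonneg (by positivity), mul_pow, inv_pow,
      Real.sq_sqrt hp.le, inv_mul_eq_div]
  have hcoef : ∑ s, ‖(√p)⁻¹ * ⟪φ, w s⟫_𝕜‖ ^ 2 = 1 := by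
    simp only [hxnorm, ← sum_div]
    exact div_self hp.ne'
  have hx : ∑ s, ‖x s‖ ^ 2 = 1 := by
    simp only [x, norm_smul, hφ, mul_one, hcoef]
  have hxw : ∑ s, re ⟪x s, w s⟫_𝕜 = √p := by
    simp only [x, inner_smul_left, map_mul, RCLike.conj_ofReal, mul_assoc, RCLike.conj_mul,
      RCLike.re_ofReal_mul, ← RCLike.ofReal_pow, RCLike.ofReal_re, ← mul_sum]
    rw [inv_mul_eq_div, Real.div_sqrt]
  have hψx : ∑ s, ∑ j, ‖⟪ψ j, x s⟫_𝕜‖ ^ 2 = ∑ j, ‖⟪ψ j, φ⟫_𝕜‖ ^ 2 := by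
    have hterm : ∀ s j, ‖⟪ψ j, x s⟫_𝕜‖ ^ 2
        = ‖(√p)⁻¹ * ⟪φ, w s⟫_𝕜‖ ^ 2 * ‖⟪ψ j, φ⟫_𝕜‖ ^ 2 := fun s j => by
      rw [inner_smul_right, norm_mul, mul_pow]
    simp only [hterm]
    rw [sum_comm]
    simp only [← sum_mul, hcoef, one_mul]
  have key := sum_sum_norm_inner_sq_sub_le_sqrt hψ hx hw
  rwa [hxw, Real.sq_sqrt hp.le, hψx, sum_comm] at key

end Effect

section Kraus

variable {𝕜 E : Type*} [RCLike 𝕜] [NormedAddCommGroup E] [InnerProductSpace 𝕜 E]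
  {I : Type*} [Fintype I] {A : I → E →L[𝕜] E}

variable (A) in
/-- `⟨y, C(|x⟩⟨x|) y⟩` for the channel `C` with Kraus operators `A`. -/
noncomputable def transitionProb (x y : E) : ℝ := ∑ i, ‖⟪y, A i x⟫_𝕜‖ ^ 2

lemma transitionProb_nonneg (x y : E) : 0 ≤ transitionProb A x y := by
  unfold transitionProb; positivity

variable [CompleteSpace E]

lemma sum_norm_apply_sq_of_kraus (hA : ∑ i, star (A i) * A i = 1) (x : E) :
    ∑ i, ‖A i x‖ ^ 2 = ‖x‖ ^ 2 := by
  calc ∑ i, ‖A i x‖ ^ 2 = re ⟪(∑ i, star (A i) * A i) x, x⟫_𝕜 := by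
        simp only [ContinuousLinearMap.apply_norm_sq_eq_inner_adjoint_left, _root_.sum_apply,
          sum_inner, map_sum]
        rfl
    _ = ‖x‖ ^ 2 := by rw [hA, one_apply_eq_self, inner_self_eq_norm_sq]

lemma sum_norm_inner_apply_sq_le (hA : ∑ i, star (A i) * A i = 1) (y x : E) :
    ∑ i, ‖⟪y, A i x⟫_𝕜‖ ^ 2 ≤ ‖y‖ ^ 2 * ‖x‖ ^ 2 :=
  calc ∑ i, ‖⟪y, A i x⟫_𝕜‖ ^ 2 ≤ ∑ i, (‖y‖ * ‖A i x‖) ^ 2 := by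
        gcongr
        exact norm_inner_le_norm _ _
    _ = ‖y‖ ^ 2 * ‖x‖ ^ 2 := by
        simp only [mul_pow, ← mul_sum, sum_norm_apply_sq_of_kraus hA]

lemma transitionProb_le_one (hA : ∑ i, star (A i) * A i = 1) {x y : E} (hx : ‖x‖ = 1)
    (hy : ‖y‖ = 1) : transitionProb A x y ≤ 1 := by
  simpa [transitionProb, hx, hy] using sum_norm_inner_apply_sq_le hA y x

lemma transitionProb_sub_sqrt_le (hA : ∑ i, star (A i) * A i = 1) {χ φ : E} (hχ : ‖χ‖ = 1)
    (hφ : ‖φ‖ = 1) {S : Type*} [Fintype S] {w : S → E} (hw : ∑ s, ‖w s‖ ^ 2 = 1) :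
    transitionProb A φ χ - √(1 - ∑ s, ‖⟪φ, w s⟫_𝕜‖ ^ 2)
      ≤ ∑ i, ∑ s, ‖⟪χ, A i (w s)⟫_𝕜‖ ^ 2 := by
  have hψ : ∀ i z, ⟪star (A i) χ, z⟫_𝕜 = ⟪χ, A i z⟫_𝕜 := fun i z => by
    rw [ContinuousLinearMap.star_eq_adjoint, ContinuousLinearMap.adjoint_inner_left]
  have key := sum_norm_inner_sq_sub_sum_sum_le_sqrt (𝕜 := 𝕜) (ψ := fun i => star (A i) χ)
    (fun z => by simpa only [hψ, hχ, one_pow, one_mul] using sum_norm_inner_apply_sq_le hA χ z)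
    hφ hw
  simp only [hψ] at key
  unfold transitionProb
  linarith

lemma transitionProb_sub_sqrt_le_sum_sum_sum (hA : ∑ i, star (A i) * A i = 1) {x v u y : E}
    (hx : ‖x‖ = 1) (hv : ‖v‖ = 1) (hu : ‖u‖ = 1) (hy : ‖y‖ = 1) :
    transitionProb A u y
        - √((1 - transitionProb A v u) + √(1 - transitionProb A x v))
      ≤ ∑ i, ∑ j, ∑ m, ‖⟪y, A i (A j (A m x))⟫_𝕜‖ ^ 2 := by
  have hx1 : ∑ m, ‖A m x‖ ^ 2 = 1 := by rw [sum_norm_apply_sq_of_kraus hA, hx, one_pow]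
  have hx2 : ∑ p : I × I, ‖A p.1 (A p.2 x)‖ ^ 2 = 1 := by
    rw [Fintype.sum_prod_type, sum_comm]
    simp only [sum_norm_apply_sq_of_kraus hA, hx, one_pow]
  have step₁ := transitionProb_sub_sqrt_le hA hu hv hx1
  have step₂ := transitionProb_sub_sqrt_le hA hy hu hx2
  simp only [Fintype.sum_prod_type] at step₂
  have hmono : √(1 - ∑ j, ∑ m, ‖⟪u, A j (A m x)⟫_𝕜‖ ^ 2)
      ≤ √((1 - transitionProb A v u) + √(1 - transitionProb A x v)) := by
    gcongr
    unfold transitionProb at step₁ ⊢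
    linarith
  linarith

end Kraus

section Averaging

variable {K : Type*} [Fintype K]

lemma expect_sqrt_le_sqrt_expect [Nonempty K] {g : K → ℝ} (hg : ∀ k, 0 ≤ g k) :
    𝔼 k, √(g k) ≤ √(𝔼 k, g k) := by
  apply Real.le_sqrt_of_sq_le
  have h := expect_mul_sq_le_sq_mul_sq univ (fun _ => (1 : ℝ)) (fun k => √(g k))
  simpa only [one_mul, one_pow, Real.sq_sqrt (hg _), Fintype.expect_one] using h

lemma le_expect_of_sub_sqrt_le [Nonempty K] (σ : Equiv.Perm K) {t β γ : K → ℝ}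
    (hβ : ∀ k, β k ∈ Set.Icc (0 : ℝ) 1) (hγ : ∀ k, γ k ∈ Set.Icc (0 : ℝ) 1)
    (ht : ∀ k, β (σ k) - √((1 - γ k) + √(1 - β k)) ≤ t k) :
    1 - (√(1 - 𝔼 k, β k) + √(√(1 - 𝔼 k, γ k) + √(1 - 𝔼 k, β k))) ≤ 𝔼 k, t k := by
  have hmean : ∀ f : K → ℝ, (∀ k, f k ∈ Set.Icc (0 : ℝ) 1) → 1 - 𝔼 k, f k ∈ Set.Icc (0 : ℝ) 1 :=
    fun f hf => ⟨sub_nonneg.2 (expect_le univ_nonempty fun k _ => (hf k).2),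
      sub_le_self _ (expect_nonneg fun k _ => (hf k).1)⟩
  have hdβ := hmean β hβ
  have hdγ := hmean γ hγ
  have hsqrtβ : 𝔼 k, √(1 - β k) ≤ √(1 - 𝔼 k, β k) := by
    refine (expect_sqrt_le_sqrt_expect fun k => sub_nonneg.2 (hβ k).2).trans_eq ?_
    rw [expect_sub_distrib, Fintype.expect_const]
  have hsqrt : 𝔼 k, √((1 - γ k) + √(1 - β k)) ≤ √((1 - 𝔼 k, γ k) + √(1 - 𝔼 k, β k)) := by
    refine (expect_sqrt_le_sqrt_expect fun k => ?_).trans (Real.sqrt_le_sqrt ?_)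
    · linarith [(hγ k).2, Real.sqrt_nonneg (1 - β k)]
    · rw [expect_add_distrib, expect_sub_distrib, Fintype.expect_const]
      linarith
  have hβσ : 𝔼 k, β (σ k) = 𝔼 k, β k := Fintype.expect_equiv σ _ _ fun _ => rfl
  have hchain : 𝔼 k, β (σ k) - 𝔼 k, √((1 - γ k) + √(1 - β k)) ≤ 𝔼 k, t k := by
    rw [← expect_sub_distrib]
    exact expect_le_expect fun k _ => ht k
  have hβ' := Real.le_sqrt_self_iff.2 hdβ.2
  have hγ' : √((1 - 𝔼 k, γ k) + √(1 - 𝔼 k, β k)) ≤ √(√(1 - 𝔼 k, γ k) + √(1 - 𝔼 k, β k)) :=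
    Real.sqrt_le_sqrt (by linarith [Real.le_sqrt_self_iff.2 hdγ.2])
  linarith

end Averaging

section MatrixEntries

variable {𝕜 n : Type*} [RCLike 𝕜] [Fintype n] [DecidableEq n]

lemma Matrix.sum_star_toEuclideanCLM_mul_self {I : Type*} [Fintype I] {A : I → Matrix n n 𝕜}
    (hA : ∑ i, (A i)ᴴ * A i = 1) :
    ∑ i, star (toEuclideanCLM (n := n) (𝕜 := 𝕜) (A i)) * toEuclideanCLM (n := n) (𝕜 := 𝕜) (A i)
      = 1 := by
  simpa only [← map_star, ← map_mul, ← map_sum, Matrix.star_eq_conjTranspose, map_one]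
    using congrArg (⇑(toEuclideanCLM (n := n) (𝕜 := 𝕜))) hA

lemma Matrix.mul_apply_eq_inner_single_left (B C : Matrix n n 𝕜) (l k : n) :
    (B * C) l k
      = ⟪EuclideanSpace.single l 1,
          toEuclideanCLM (n := n) (𝕜 := 𝕜) B (WithLp.toLp 2 (C.col k))⟫_𝕜 := by
  simp [EuclideanSpace.inner_single_left, Matrix.mul_apply, Matrix.mulVec, dotProduct]

lemma Matrix.mul_apply_eq_inner_single_right (C B : Matrix n n 𝕜) (l k : n) :
    (C * B) l k
      = ⟪WithLp.toLp 2 (star (C.row l)),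
          toEuclideanCLM (n := n) (𝕜 := 𝕜) B (EuclideanSpace.single k 1)⟫_𝕜 := by
  simp [EuclideanSpace.inner_eq_star_dotProduct, Matrix.mul_apply, dotProduct, mul_comm]

end MatrixEntries

section Fourier

variable {N : ℕ} [NeZero N]

lemma QFT_apply (j k : ZMod N) : QFT N j k = (ZMod.toCircle (j * k) : ℂ) / √(N : ℝ) := by
  rw [show j * k = ((j.val * k.val : ℕ) : ZMod N) by simp, ZMod.toCircle_natCast, QFT]
  push_cast
  ring_nf

lemma norm_QFT_apply (j k : ZMod N) : ‖QFT N j k‖ = (√(N : ℝ))⁻¹ := by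
  rw [QFT_apply, norm_div, Circle.norm_coe, Complex.norm_real, Real.norm_eq_abs,
    abs_of_nonneg (Real.sqrt_nonneg _), one_div]

lemma star_QFT_apply (j k : ZMod N) : star (QFT N k j) = QFT N j (-k) := by
  rw [QFT_apply, QFT_apply, star_div₀, Complex.star_def, Complex.conj_ofReal,
    ← Circle.coe_inv_eq_conj, ← AddChar.map_neg_eq_inv, mul_comm, neg_mul_eq_mul_neg]

variable (N) in
noncomputable def qftCol (k : ZMod N) : EuclideanSpace ℂ (ZMod N) := WithLp.toLp 2 ((QFT N).col k)

lemma norm_qftCol (k : ZMod N) : ‖qftCol N k‖ = 1 := by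
  rw [EuclideanSpace.norm_eq]
  simp [qftCol, norm_QFT_apply]

lemma mul_QFT_apply (B : Matrix (ZMod N) (ZMod N) ℂ) (l k : ZMod N) :
    (B * QFT N) l k
      = ⟪EuclideanSpace.single l 1, toEuclideanCLM (n := ZMod N) (𝕜 := ℂ) B (qftCol N k)⟫_ℂ :=
  B.mul_apply_eq_inner_single_left _ l k

lemma QFT_mul_apply (B : Matrix (ZMod N) (ZMod N) ℂ) (l k : ZMod N) :
    (QFT N * B) l k
      = ⟪qftCol N (-l), toEuclideanCLM (n := ZMod N) (𝕜 := ℂ) B (EuclideanSpace.single k 1)⟫_ℂ := by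
  rw [Matrix.mul_apply_eq_inner_single_right, qftCol]
  congr 3
  funext j
  exact star_QFT_apply j l

lemma conjTranspose_QFT_mul_apply (B : Matrix (ZMod N) (ZMod N) ℂ) (l k : ZMod N) :
    ((QFT N)ᴴ * B) l k
      = ⟪qftCol N l, toEuclideanCLM (n := ZMod N) (𝕜 := ℂ) B (EuclideanSpace.single k 1)⟫_ℂ := by
  rw [Matrix.mul_apply_eq_inner_single_right, qftCol]
  congr 3
  funext j
  simp

lemma ZMod.one_div_mul_sum_eq_expect (f : ZMod N → ℝ) : (1 / N : ℝ) * ∑ k, f k = 𝔼 k, f k := by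
  rw [Fintype.expect_eq_sum_div_card, ZMod.card]
  ring

end Fourier

theorem cube_in_t1_t2_general (N : ℕ) [NeZero N] (η1 η2 : ℝ)
    (I : Type) [Fintype I] (A : I → Matrix (ZMod N) (ZMod N) ℂ)
    (hK : ∑ i : I, (A i)ᴴ * A i = 1)
    (hS1 : (1 / N : ℝ) * ∑ k : ZMod N, ∑ i : I,
      ‖(A i * QFT N) k k‖ ^ 2 ≥ 1 - η1)
    (hS2 : (1 / N : ℝ) * ∑ k : ZMod N, ∑ i : I,
      ‖(QFT N * A i) k k‖ ^ 2 ≥ 1 - η2) :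
    ((1 / N : ℝ) * ∑ k : ZMod N, ∑ i : I, ∑ j : I, ∑ m : I,
        ‖(A i * A j * A m * QFT N) (-k) k‖ ^ 2
      ≥ 1 - (Real.sqrt η1 + Real.sqrt (Real.sqrt η1 + Real.sqrt η2))) ∧
    ((1 / N : ℝ) * ∑ k : ZMod N, ∑ i : I, ∑ j : I, ∑ m : I,
        ‖((QFT N)ᴴ * (A i * A j * A m)) k k‖ ^ 2
      ≥ 1 - (Real.sqrt η2 + Real.sqrt (Real.sqrt η1 + Real.sqrt η2))) := by
  set Â : I → _ := fun i => toEuclideanCLM (n := ZMod N) (𝕜 := ℂ) (A i)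
  have hÂ : ∑ i, star (Â i) * Â i = 1 := Matrix.sum_star_toEuclideanCLM_mul_self hK
  set e : ZMod N → EuclideanSpace ℂ (ZMod N) := fun k => EuclideanSpace.single k 1
  have he : ∀ k, ‖e k‖ = 1 := by simp [e]
  set a : ZMod N → ℝ := fun k => transitionProb Â (qftCol N k) (e k)
  set b : ZMod N → ℝ := fun k => transitionProb Â (e k) (qftCol N (-k))
  have ha01 : ∀ k, a k ∈ Set.Icc (0 : ℝ) 1 := fun k =>
    ⟨transitionProb_nonneg _ _, transitionProb_le_one hÂ (norm_qftCol k) (he k)⟩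
  have hb01 : ∀ k, b k ∈ Set.Icc (0 : ℝ) 1 := fun k =>
    ⟨transitionProb_nonneg _ _, transitionProb_le_one hÂ (he k) (norm_qftCol (-k))⟩
  simp only [ge_iff_le, ZMod.one_div_mul_sum_eq_expect, mul_QFT_apply, QFT_mul_apply,
    conjTranspose_QFT_mul_apply, map_mul] at hS1 hS2 ⊢
  have ha : 1 - η1 ≤ 𝔼 k, a k := hS1
  have hb : 1 - η2 ≤ 𝔼 k, b k := hS2
  have hT1 := le_expect_of_sub_sqrt_le (Equiv.neg _) ha01 hb01 fun k =>
    transitionProb_sub_sqrt_le_sum_sum_sum hÂ (norm_qftCol k) (he k) (norm_qftCol (-k)) (he (-k))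
  have hT2 := le_expect_of_sub_sqrt_le (Equiv.neg _) (γ := fun k => a (-k)) hb01
    (fun k => ha01 (-k)) fun k => by
      simpa only [b, Equiv.neg_apply, neg_neg] using transitionProb_sub_sqrt_le_sum_sum_sum hÂ
        (he k) (norm_qftCol (-k)) (he (-k)) (norm_qftCol k)
  rw [Fintype.expect_equiv (Equiv.neg _) (fun k => a (-k)) a fun _ => rfl] at hT2
  constructor
  · refine le_trans ?_ hT1
    rw [add_comm √(1 - 𝔼 k, b k)]
    gcongr <;> linarith
  · refine le_trans ?_ hT2
    gcongr <;> linarith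

/-- If a quantum channel `C` with Kraus operators `A i` satisfies `S1(η1)` and
`S2(η2)`, then the cube `C³`, with Kraus operators `A i * A j * A m`, satisfies
`T1(√η1 + √(√η1 + √η2))` and `T2(√η2 + √(√η1 + √η2))`. -/
theorem cube_in_t1_t2 (N : ℕ) [NeZero N] (η1 η2 : ℝ)
    (hη1 : η1 ∈ Set.Icc (0 : ℝ) 1) (hη2 : η2 ∈ Set.Icc (0 : ℝ) 1)
    (I : Type) [Fintype I] (A : I → Matrix (ZMod N) (ZMod N) ℂ)
    (hK : ∑ i : I, (A i)ᴴ * A i = 1)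
    (hS1 : (1 / N : ℝ) * ∑ k : ZMod N, ∑ i : I,
      ‖(A i * QFT N) k k‖ ^ 2 ≥ 1 - η1)
    (hS2 : (1 / N : ℝ) * ∑ k : ZMod N, ∑ i : I,
      ‖(QFT N * A i) k k‖ ^ 2 ≥ 1 - η2) :
    ((1 / N : ℝ) * ∑ k : ZMod N, ∑ i : I, ∑ j : I, ∑ m : I,
        ‖(A i * A j * A m * QFT N) (-k) k‖ ^ 2
      ≥ 1 - (Real.sqrt η1 + Real.sqrt (Real.sqrt η1 + Real.sqrt η2))) ∧
    ((1 / N : ℝ) * ∑ k : ZMod N, ∑ i : I, ∑ j : I, ∑ m : I,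
        ‖((QFT N)ᴴ * (A i * A j * A m)) k k‖ ^ 2
      ≥ 1 - (Real.sqrt η2 + Real.sqrt (Real.sqrt η1 + Real.sqrt η2))) :=
  cube_in_t1_t2_general N η1 η2 I A hK hS1 hS2
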